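/- Let α_i > 0 (i = 1,…,s) and β > 0, let ℳ = {M_0, M_1, M_2} be any (n+m) × (n+m) matrices with T_ℳ well-defined, and let {v^k} be generated by v^{k+1} = T_ℳ(v^k, v^{k−1}). Then for every k ≥ 1 and every v ∈ ℝ^{n+m}, G(v^{k+1}, v) ≤ ⟨M_1 v^k + M_2 v^{k−1} − M_0 v^{k+1}, v^{k+1} − v⟩ (as an inequality in the extended reals). -/

import Mathlib

open Matrix Filter Topology

noncomputable section

/-- Spectral norm (largest singular value) of a real matrix. -/
def specNorm {p q : Type*} [Fintype p] [Fintype q] [DecidableEq q]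
    (M : Matrix p q ℝ) : ℝ :=
  ‖LinearMap.toContinuousLinearMap (Matrix.toEuclideanLin M)‖

/-- The square root of a positive semidefinite matrix, as defined in the older Mathlib. -/
def Matrix.PosSemidef.sqrt {d : Type*} [Fintype d] [DecidableEq d] {A : Matrix d d ℝ}
    (hA : A.PosSemidef) : Matrix d d ℝ :=
  (hA.1.eigenvectorUnitary : Matrix d d ℝ) *
    diagonal (fun i => ((Real.sqrt (hA.1.eigenvalues i) : ℝ) : ℝ)) *
    (star hA.1.eigenvectorUnitary : Matrix d d ℝ)

/-- Condition-M for a triple of matrices: `M0 = M1 + M2`, `H := M0 + M2` is symmetric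
positive definite, and `‖H^{-1/2} M2 H^{-1/2}‖₂ < 1/2` (here `H^{-1/2}` is the positive
semidefinite square root of `H⁻¹`). -/
def ConditionM {d : Type*} [Fintype d] [DecidableEq d] (M0 M1 M2 : Matrix d d ℝ) : Prop :=
  M0 = M1 + M2 ∧ ∃ hH : (M0 + M2).PosDef,
    specNorm (Matrix.PosSemidef.sqrt hH.inv.posSemidef * M2 *
      Matrix.PosSemidef.sqrt hH.inv.posSemidef) < 1 / 2

/-- The cost functional defining the proximity operator `prox_{φ,H}` at input `x`. -/
def proxCost {ι : Type*} [Fintype ι] (φ : (ι → ℝ) → EReal) (H : Matrix ι ι ℝ)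
    (x u : ι → ℝ) : EReal :=
  ((((1 : ℝ) / 2) * ((u - x) ⬝ᵥ H.mulVec (u - x)) : ℝ) : EReal) + φ u

/-- `p = prox_{φ,H}(x)`: `p` is the unique minimizer of the prox cost. -/
def IsProx {ι : Type*} [Fintype ι] (φ : (ι → ℝ) → EReal) (H : Matrix ι ι ℝ)
    (x p : ι → ℝ) : Prop :=
  (∀ u, proxCost φ H x p ≤ proxCost φ H x u) ∧
  ∀ q, (∀ u, proxCost φ H x q ≤ proxCost φ H x u) → q = p

/-- Proper lower semicontinuous convex extended-real-valued function. -/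
def ProperConvexLsc {ι : Type*} [Fintype ι] (f : (ι → ℝ) → EReal) : Prop :=
  (∃ x, f x ≠ ⊤) ∧ (∀ x, f x ≠ ⊥) ∧ LowerSemicontinuous f ∧
  ∀ x y : ι → ℝ, ∀ t : ℝ, 0 < t → t < 1 →
    f (t • x + (1 - t) • y) ≤ (t : EReal) * f x + ((1 - t : ℝ) : EReal) * f y

/-- Scaling of an extended-real-valued function by a real constant. -/
def smulF {V : Type*} (c : ℝ) (φ : V → EReal) : V → EReal := fun u => (c : EReal) * φ u

/-- The conjugate of the indicator of `C = {b}`: `ι_C*(y) = ⟨y, b⟩`. -/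
def iotaCstar {m : ℕ} (b : Fin m → ℝ) : (Fin m → ℝ) → EReal :=
  fun y => ((y ⬝ᵥ b : ℝ) : EReal)

variable {s m : ℕ} {n : Fin s → ℕ}

/-- Index type for the concatenated variable `x = (x_1, …, x_s)`. -/
abbrev XIdx (n : Fin s → ℕ) := (i : Fin s) × Fin (n i)

/-- Index type for the full variable `v = (x, y)`. -/
abbrev FIdx (n : Fin s → ℕ) (m : ℕ) := XIdx n ⊕ Fin m

/-- The `i`-th block of a concatenated vector. -/
def blk (x : XIdx n → ℝ) (i : Fin s) : Fin (n i) → ℝ := fun j => x ⟨i, j⟩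

/-- The matrix `A = [A_1 … A_s]`. -/
def bigA (A : ∀ i : Fin s, Matrix (Fin m) (Fin (n i)) ℝ) : Matrix (Fin m) (XIdx n) ℝ :=
  Matrix.of fun r p => A p.1 r p.2

/-- The separable objective `∑ f_i(x_i)`. -/
def objSum (f : ∀ i : Fin s, (Fin (n i) → ℝ) → EReal) (x : XIdx n → ℝ) : EReal :=
  ∑ i, f i (blk x i)

/-- `∑ A_i x_i`. -/
def sumAx (A : ∀ i : Fin s, Matrix (Fin m) (Fin (n i)) ℝ) (x : XIdx n → ℝ) : Fin m → ℝ :=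
  ∑ i, (A i).mulVec (blk x i)

/-- `x` is a solution of problem (P). -/
def IsSolution (f : ∀ i : Fin s, (Fin (n i) → ℝ) → EReal)
    (A : ∀ i : Fin s, Matrix (Fin m) (Fin (n i)) ℝ) (b : Fin m → ℝ)
    (x : XIdx n → ℝ) : Prop :=
  sumAx A x = b ∧ ∀ z : XIdx n → ℝ, sumAx A z = b → objSum f x ≤ objSum f z

/-- `b ∈ A(ri(dom(∑ f_i)))` where `ri` is the relative (intrinsic) interior. -/
def RiCond (f : ∀ i : Fin s, (Fin (n i) → ℝ) → EReal)
    (A : ∀ i : Fin s, Matrix (Fin m) (Fin (n i)) ℝ) (b : Fin m → ℝ) : Prop :=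
  b ∈ (fun x => sumAx A x) '' intrinsicInterior ℝ {x : XIdx n → ℝ | objSum f x ≠ ⊤}

/-- The `x`-part of a full vector. -/
def xpart (v : FIdx n m → ℝ) : XIdx n → ℝ := fun p => v (Sum.inl p)

/-- The `y`-part of a full vector. -/
def ypart (v : FIdx n m → ℝ) : Fin m → ℝ := fun r => v (Sum.inr r)

/-- The function `Φ(x_1,…,x_s,y) = ∑ f_i(x_i) + ι_C*(y)`. -/
def PhiFun (f : ∀ i : Fin s, (Fin (n i) → ℝ) → EReal) (b : Fin m → ℝ)
    (v : FIdx n m → ℝ) : EReal :=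
  objSum f (xpart v) + iotaCstar b (ypart v)

/-- The diagonal matrix `R = diag((β/α_1)I, …, (β/α_s)I, (1/β)I)`. -/
def Rmat (α : Fin s → ℝ) (β : ℝ) : Matrix (FIdx n m) (FIdx n m) ℝ :=
  Matrix.diagonal (Sum.elim (fun p : XIdx n => β / α p.1) fun _ => 1 / β)

/-- The inverse `R⁻¹` of the diagonal matrix `R`. -/
def Rinv (α : Fin s → ℝ) (β : ℝ) : Matrix (FIdx n m) (FIdx n m) ℝ :=
  Matrix.diagonal (Sum.elim (fun p : XIdx n => α p.1 / β) fun _ => β)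

/-- The expansive matrix `E = [[I, −P⁻¹Aᵀ],[βA, I]]`. -/
def Emat (A : ∀ i : Fin s, Matrix (Fin m) (Fin (n i)) ℝ) (α : Fin s → ℝ) (β : ℝ) :
    Matrix (FIdx n m) (FIdx n m) ℝ :=
  Matrix.fromBlocks 1 (-(Matrix.diagonal (fun p : XIdx n => α p.1 / β) * (bigA A)ᵀ))
    (β • bigA A) 1

/-- The skew-symmetric matrix `S_A = [[0, −Aᵀ],[A, 0]]`. -/
def SAmat (A : ∀ i : Fin s, Matrix (Fin m) (Fin (n i)) ℝ) :
    Matrix (FIdx n m) (FIdx n m) ℝ :=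
  Matrix.fromBlocks 0 (-(bigA A)ᵀ) (bigA A) 0

/-- `w = 𝒯(v)`, where `𝒯(x_1,…,x_s,y) = (prox_{(α_1/β)f_1}x_1, …, prox_{(α_s/β)f_s}x_s,
prox_{β ι_C*}y)`. -/
def isT (f : ∀ i : Fin s, (Fin (n i) → ℝ) → EReal) (b : Fin m → ℝ)
    (α : Fin s → ℝ) (β : ℝ) (v w : FIdx n m → ℝ) : Prop :=
  (∀ i, IsProx (smulF (α i / β) (f i)) 1 (blk (xpart v) i) (blk (xpart w) i)) ∧
  IsProx (smulF β (iotaCstar b)) 1 (ypart v) (ypart w)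

/-- `w = T_ℳ(u₁, u₂)`, i.e. `w = 𝒯((E − R⁻¹M₀)w + R⁻¹M₁u₁ + R⁻¹M₂u₂)`. -/
def isTM (f : ∀ i : Fin s, (Fin (n i) → ℝ) → EReal)
    (A : ∀ i : Fin s, Matrix (Fin m) (Fin (n i)) ℝ) (b : Fin m → ℝ)
    (α : Fin s → ℝ) (β : ℝ) (M0 M1 M2 : Matrix (FIdx n m) (FIdx n m) ℝ)
    (u1 u2 w : FIdx n m → ℝ) : Prop :=
  isT f b α β ((Emat A α β - Rinv α β * M0).mulVec w + (Rinv α β * M1).mulVec u1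
    + (Rinv α β * M2).mulVec u2) w

/-- `T_ℳ` is well-defined. -/
def TMWellDefined (f : ∀ i : Fin s, (Fin (n i) → ℝ) → EReal)
    (A : ∀ i : Fin s, Matrix (Fin m) (Fin (n i)) ℝ) (b : Fin m → ℝ)
    (α : Fin s → ℝ) (β : ℝ) (M0 M1 M2 : Matrix (FIdx n m) (FIdx n m) ℝ) : Prop :=
  ∀ u1 u2 : FIdx n m → ℝ, ∃! w, isTM f A b α β M0 M1 M2 u1 u2 w


/-- `G(v, v') := Φ(v) − Φ(v') + ⟨v', S_A v⟩`, valued in the extended reals. -/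
def Gfun {s m : ℕ} {n : Fin s → ℕ} (f : ∀ i : Fin s, (Fin (n i) → ℝ) → EReal)
    (A : ∀ i : Fin s, Matrix (Fin m) (Fin (n i)) ℝ) (b : Fin m → ℝ)
    (v v' : FIdx n m → ℝ) : EReal :=
  PhiFun f b v - PhiFun f b v' + ((v' ⬝ᵥ (SAmat A).mulVec v : ℝ) : EReal)

/-!
The scheme is an implicit proximal step: with `z := (E − R⁻¹M₀)v^{k+1} + R⁻¹M₁v^k + R⁻¹M₂v^{k−1}`
one has `v^{k+1} = 𝒯 z`, and `𝒯` is blockwise the proximity operator of `Φ` in the metric `R`.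
The variational inequality of a proximity operator gives
`Φ(v^{k+1}) − Φ(v) ≤ ⟨R(z − v^{k+1}), v^{k+1} − v⟩`,
and `RE = R + S_A` turns `R(z − v^{k+1})` into `S_A v^{k+1} + M₁v^k + M₂v^{k−1} − M₀v^{k+1}`.
The `S_A` term is `−⟨v, S_A v^{k+1}⟩` by skew-symmetry, which is exactly the coupling term of `G`.
-/

lemma EReal.coe_finset_sum {γ : Type*} (t : Finset γ) (g : γ → ℝ) :
    ((∑ i ∈ t, g i : ℝ) : EReal) = ∑ i ∈ t, (g i : EReal) :=
  map_sum (⟨⟨Real.toEReal, EReal.coe_zero⟩, EReal.coe_add⟩ : ℝ →+ EReal) g t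

lemma le_of_forall_mem_Ioo_le_add_mul {a b K : ℝ} (h : ∀ t ∈ Set.Ioo (0 : ℝ) 1, a ≤ b + t * K) :
    a ≤ b := by
  have hlim : Tendsto (fun t : ℝ => b + t * K) (𝓝[>] 0) (𝓝 b) := by
    have : Continuous fun t : ℝ => b + t * K := by fun_prop
    simpa using (this.tendsto 0).mono_left nhdsWithin_le_nhds
  exact ge_of_tendsto hlim (Filter.mem_of_superset (Ioo_mem_nhdsGT one_pos) h)

section Prox

variable {ι : Type*} [Fintype ι] [DecidableEq ι]

lemma proxCost_smulF_one (φ : (ι → ℝ) → EReal) (c : ℝ) (x u : ι → ℝ) :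
    proxCost (smulF c φ) 1 x u = ((1 / 2 * ((u - x) ⬝ᵥ (u - x)) : ℝ) : EReal) + c * φ u := by
  simp only [proxCost, smulF, Matrix.one_mulVec]

variable {φ : (ι → ℝ) → EReal} {c : ℝ} {x p : ι → ℝ}

lemma ne_top_of_proxCost_min (hprop : ∃ z, φ z ≠ ⊤) (hbot : ∀ z, φ z ≠ ⊥) (hc : 0 < c)
    (hp : ∀ u, proxCost (smulF c φ) 1 x p ≤ proxCost (smulF c φ) 1 x u) : φ p ≠ ⊤ := by
  obtain ⟨z, hz⟩ := hprop
  obtain ⟨r, hr⟩ : ∃ r : ℝ, φ z = r := ⟨_, (EReal.coe_toReal hz (hbot z)).symm⟩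
  intro htop
  have h := hp z
  rw [proxCost_smulF_one, proxCost_smulF_one, htop, hr, EReal.coe_mul_top_of_pos hc,
    EReal.coe_add_top, ← EReal.coe_mul, ← EReal.coe_add, top_le_iff] at h
  exact EReal.coe_ne_top _ h

lemma le_add_of_proxCost_min (hprop : ∃ z, φ z ≠ ⊤) (hbot : ∀ z, φ z ≠ ⊥)
    (hconv : ∀ x y : ι → ℝ, ∀ t : ℝ, 0 < t → t < 1 →
      φ (t • x + (1 - t) • y) ≤ (t : EReal) * φ x + ((1 - t : ℝ) : EReal) * φ y)
    (hc : 0 < c) (hp : ∀ u, proxCost (smulF c φ) 1 x p ≤ proxCost (smulF c φ) 1 x u)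
    (u : ι → ℝ) : φ p ≤ ((c⁻¹ * ((x - p) ⬝ᵥ (p - u)) : ℝ) : EReal) + φ u := by
  obtain ⟨rp, hrp⟩ : ∃ r : ℝ, φ p = r :=
    ⟨_, (EReal.coe_toReal (ne_top_of_proxCost_min hprop hbot hc hp) (hbot p)).symm⟩
  rcases eq_or_ne (φ u) ⊤ with hu | hu
  · rw [hu, EReal.coe_add_top]
    exact le_top
  obtain ⟨ru, hru⟩ : ∃ r : ℝ, φ u = r := ⟨_, (EReal.coe_toReal hu (hbot u)).symm⟩
  rw [hrp, hru, ← EReal.coe_add, EReal.coe_le_coe_iff, ← sub_le_iff_le_add, inv_mul_eq_div,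
    le_div_iff₀' hc]
  -- compare `p` with the point `t • u + (1 - t) • p` of the segment and let `t → 0⁺`
  refine le_of_forall_mem_Ioo_le_add_mul (K := (u - p) ⬝ᵥ (u - p) / 2) fun t ⟨ht0, ht1⟩ => ?_
  set ut := t • u + (1 - t) • p
  obtain ⟨rt, hrt⟩ : ∃ r : ℝ, φ ut = r := by
    have h := hconv u p t ht0 ht1
    rw [hru, hrp, ← EReal.coe_mul, ← EReal.coe_mul, ← EReal.coe_add] at h
    exact ⟨_, (EReal.coe_toReal (ne_top_of_le_ne_top (EReal.coe_ne_top _) h) (hbot ut)).symm⟩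
  have hconv_t : rt ≤ t * ru + (1 - t) * rp := by
    have h := hconv u p t ht0 ht1
    rwa [hru, hrp, hrt, ← EReal.coe_mul, ← EReal.coe_mul, ← EReal.coe_add,
      EReal.coe_le_coe_iff] at h
  have hmin_t :
      1 / 2 * ((p - x) ⬝ᵥ (p - x)) + c * rp ≤ 1 / 2 * ((ut - x) ⬝ᵥ (ut - x)) + c * rt := by
    have h := hp ut
    rwa [proxCost_smulF_one, proxCost_smulF_one, hrp, hrt, ← EReal.coe_mul, ← EReal.coe_mul,
      ← EReal.coe_add, ← EReal.coe_add, EReal.coe_le_coe_iff] at h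
  have hexpand : (ut - x) ⬝ᵥ (ut - x) = (p - x) ⬝ᵥ (p - x) + 2 * t * ((x - p) ⬝ᵥ (p - u)) +
      t ^ 2 * ((u - p) ⬝ᵥ (u - p)) := by
    have hut : ut - x = (p - x) + t • (u - p) := by
      ext j
      simp only [ut, Pi.add_apply, Pi.sub_apply, Pi.smul_apply, smul_eq_mul]
      ring
    have hcross : (x - p) ⬝ᵥ (p - u) = (u - p) ⬝ᵥ (p - x) := by
      rw [← neg_sub p x, ← neg_sub u p, neg_dotProduct, dotProduct_neg, neg_neg, dotProduct_comm]
    rw [hut, hcross]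
    simp only [dotProduct_add, add_dotProduct, dotProduct_smul, smul_dotProduct, smul_eq_mul,
      dotProduct_comm (p - x) (u - p)]
    ring
  have hct : c * rt ≤ c * (t * ru + (1 - t) * rp) := mul_le_mul_of_nonneg_left hconv_t hc.le
  have : t * (c * (rp - ru)) ≤ t * ((x - p) ⬝ᵥ (p - u) + t * ((u - p) ⬝ᵥ (u - p) / 2)) := by
    linarith
  exact le_of_mul_le_mul_left this ht0

end Prox

lemma iotaCstar_affine (b x y : Fin m → ℝ) (t : ℝ) :
    iotaCstar b (t • x + (1 - t) • y) =
      (t : EReal) * iotaCstar b x + ((1 - t : ℝ) : EReal) * iotaCstar b y := by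
  simp only [iotaCstar, add_dotProduct, smul_dotProduct, smul_eq_mul, EReal.coe_add, EReal.coe_mul]

lemma dotProduct_mulVec_self_eq_zero {d R : Type*} [Fintype d] [CommRing R] [NoZeroDivisors R]
    [CharZero R] {S : Matrix d d R} (hS : Sᵀ = -S) (p : d → R) : p ⬝ᵥ S *ᵥ p = 0 := by
  have h : p ⬝ᵥ S *ᵥ p = -(p ⬝ᵥ S *ᵥ p) := by
    conv_lhs => rw [dotProduct_mulVec, ← mulVec_transpose, hS, neg_mulVec, neg_dotProduct,
      dotProduct_comm]
  exact self_eq_neg.mp h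

section Blocks

variable {α : Fin s → ℝ} {β : ℝ}

lemma Rmat_mul_Rinv (hα : ∀ i, α i ≠ 0) (hβ : β ≠ 0) :
    (Rmat α β : Matrix (FIdx n m) (FIdx n m) ℝ) * Rinv α β = 1 := by
  rw [Rmat, Rinv, diagonal_mul_diagonal, ← diagonal_one]
  congr 1
  ext (q | r)
  · simp [hα q.1, hβ]
  · simp [hβ]

lemma Rmat_mul_Emat (hα : ∀ i, α i ≠ 0) (hβ : β ≠ 0)
    (A : ∀ i : Fin s, Matrix (Fin m) (Fin (n i)) ℝ) :
    Rmat α β * Emat A α β = Rmat α β + SAmat A := by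
  have hP : diagonal (fun p : XIdx n => β / α p.1) * diagonal (fun p => α p.1 / β) = 1 := by
    rw [diagonal_mul_diagonal, ← diagonal_one]
    congr 1
    ext q
    simp [hα q.1, hβ]
  rw [Rmat, Emat, SAmat, ← fromBlocks_diagonal, fromBlocks_multiply, fromBlocks_add]
  congr 1
  · simp
  · rw [Matrix.mul_neg, ← Matrix.mul_assoc, hP]
    simp
  · ext r q
    simp [diagonal_mul, hβ]
  · simp

lemma Rmat_mulVec_residual (hα : ∀ i, α i ≠ 0) (hβ : β ≠ 0)
    (A : ∀ i : Fin s, Matrix (Fin m) (Fin (n i)) ℝ) (M0 M1 M2 : Matrix (FIdx n m) (FIdx n m) ℝ)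
    (w u1 u2 : FIdx n m → ℝ) :
    Rmat α β *ᵥ ((Emat A α β - Rinv α β * M0) *ᵥ w + (Rinv α β * M1) *ᵥ u1 +
        (Rinv α β * M2) *ᵥ u2 - w) = SAmat A *ᵥ w + (M1 *ᵥ u1 + M2 *ᵥ u2 - M0 *ᵥ w) := by
  simp only [mulVec_add, mulVec_sub, mulVec_mulVec, Rmat_mul_Emat hα hβ,
    ← Matrix.mul_assoc, Rmat_mul_Rinv hα hβ, Matrix.one_mul, add_mulVec, sub_mulVec]
  abel

lemma Rmat_mulVec_dotProduct (u u' : FIdx n m → ℝ) :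
    (Rmat α β *ᵥ u) ⬝ᵥ u' =
      ∑ i, β / α i * (blk (xpart u) i ⬝ᵥ blk (xpart u') i) + 1 / β * (ypart u ⬝ᵥ ypart u') := by
  simp only [dotProduct, Fintype.sum_sum_type, Fintype.sum_sigma, Finset.mul_sum, Rmat,
    mulVec_diagonal, Sum.elim_inl, Sum.elim_inr, blk, xpart, ypart, mul_assoc]

lemma SAmat_transpose (A : ∀ i : Fin s, Matrix (Fin m) (Fin (n i)) ℝ) : (SAmat A)ᵀ = -SAmat A := by
  rw [SAmat, fromBlocks_transpose, fromBlocks_neg]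
  simp

lemma SAmat_mulVec_dotProduct_sub (A : ∀ i : Fin s, Matrix (Fin m) (Fin (n i)) ℝ)
    (p w : FIdx n m → ℝ) : (SAmat A *ᵥ p) ⬝ᵥ (p - w) = -(w ⬝ᵥ SAmat A *ᵥ p) := by
  rw [dotProduct_comm, sub_dotProduct, dotProduct_mulVec_self_eq_zero (SAmat_transpose A), zero_sub]

end Blocks

lemma PhiFun_le_of_isT {f : ∀ i : Fin s, (Fin (n i) → ℝ) → EReal} {b : Fin m → ℝ}
    {α : Fin s → ℝ} {β : ℝ} (hf : ∀ i, ProperConvexLsc (f i)) (hα : ∀ i, 0 < α i) (hβ : 0 < β)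
    {z p : FIdx n m → ℝ} (hT : isT f b α β z p) (w : FIdx n m → ℝ) :
    PhiFun f b p ≤ (((Rmat α β *ᵥ (z - p)) ⬝ᵥ (p - w) : ℝ) : EReal) + PhiFun f b w := by
  have hx : ∀ i, f i (blk (xpart p) i) ≤
      ((β / α i * (blk (xpart (z - p)) i ⬝ᵥ blk (xpart (p - w)) i) : ℝ) : EReal) +
        f i (blk (xpart w) i) := fun i => by
    have h := le_add_of_proxCost_min (hf i).1 (hf i).2.1 (hf i).2.2.2 (div_pos (hα i) hβ)
      (hT.1 i).1 (blk (xpart w) i)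
    rwa [inv_div] at h
  have hy : iotaCstar b (ypart p) ≤
      ((1 / β * (ypart (z - p) ⬝ᵥ ypart (p - w)) : ℝ) : EReal) + iotaCstar b (ypart w) := by
    have h := le_add_of_proxCost_min (φ := iotaCstar b) ⟨0, EReal.coe_ne_top _⟩
      (fun _ => EReal.coe_ne_bot _)
      (fun x y t _ _ => (iotaCstar_affine b x y t).le) hβ hT.2.1 (ypart w)
    rwa [← one_div] at h
  rw [Rmat_mulVec_dotProduct, EReal.coe_add, EReal.coe_finset_sum, PhiFun, PhiFun, objSum, objSum,
    add_add_add_comm, ← Finset.sum_add_distrib]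
  exact add_le_add (Finset.sum_le_sum fun i _ => hx i) hy

theorem scheme_G_bound_general {s m : ℕ} {n : Fin s → ℕ}
    (f : ∀ i : Fin s, (Fin (n i) → ℝ) → EReal)
    (A : ∀ i : Fin s, Matrix (Fin m) (Fin (n i)) ℝ) (b : Fin m → ℝ)
    (hf : ∀ i, ProperConvexLsc (f i))
    (α : Fin s → ℝ) (hα : ∀ i, 0 < α i) (β : ℝ) (hβ : 0 < β)
    (M0 M1 M2 : Matrix (FIdx n m) (FIdx n m) ℝ)
    (v : ℕ → FIdx n m → ℝ)
    (hrec : ∀ k : ℕ, isTM f A b α β M0 M1 M2 (v (k + 1)) (v k) (v (k + 2))) :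
    ∀ (k : ℕ) (w : FIdx n m → ℝ),
      Gfun f A b (v (k + 2)) w ≤
        (((M1.mulVec (v (k + 1)) + M2.mulVec (v k) - M0.mulVec (v (k + 2))) ⬝ᵥ
          (v (k + 2) - w) : ℝ) : EReal) := by
  intro k w
  set residual := M1 *ᵥ v (k + 1) + M2 *ᵥ v k - M0 *ᵥ v (k + 2)
  have hΦ := PhiFun_le_of_isT hf hα hβ (hrec k) w
  rw [Rmat_mulVec_residual (fun i => (hα i).ne') hβ.ne', add_dotProduct,
    SAmat_mulVec_dotProduct_sub] at hΦ
  calc Gfun f A b (v (k + 2)) w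
      = PhiFun f b (v (k + 2)) - PhiFun f b w + ((w ⬝ᵥ SAmat A *ᵥ v (k + 2) : ℝ) : EReal) := rfl
    _ ≤ ((-(w ⬝ᵥ SAmat A *ᵥ v (k + 2)) + residual ⬝ᵥ (v (k + 2) - w) : ℝ) : EReal) +
          ((w ⬝ᵥ SAmat A *ᵥ v (k + 2) : ℝ) : EReal) :=
      add_le_add_left (EReal.sub_le_of_le_add hΦ) _
    _ = ((residual ⬝ᵥ (v (k + 2) - w) : ℝ) : EReal) := by
      rw [← EReal.coe_add, neg_add_cancel_comm]

/-- for the scheme `v^{k+1} = T_ℳ(v^k, v^{k−1})`, one has for every `k ≥ 1`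
and every `v` that `G(v^{k+1}, v) ≤ ⟨M₁v^k + M₂v^{k−1} − M₀v^{k+1}, v^{k+1} − v⟩`. -/
theorem scheme_G_bound {s m : ℕ} {n : Fin s → ℕ}
    (f : ∀ i : Fin s, (Fin (n i) → ℝ) → EReal)
    (A : ∀ i : Fin s, Matrix (Fin m) (Fin (n i)) ℝ) (b : Fin m → ℝ)
    (hf : ∀ i, ProperConvexLsc (f i))
    (α : Fin s → ℝ) (hα : ∀ i, 0 < α i) (β : ℝ) (hβ : 0 < β)
    (M0 M1 M2 : Matrix (FIdx n m) (FIdx n m) ℝ)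
    (hwd : TMWellDefined f A b α β M0 M1 M2)
    (v : ℕ → FIdx n m → ℝ)
    (hrec : ∀ k : ℕ, isTM f A b α β M0 M1 M2 (v (k + 1)) (v k) (v (k + 2))) :
    ∀ (k : ℕ) (w : FIdx n m → ℝ),
      Gfun f A b (v (k + 2)) w ≤
        (((M1.mulVec (v (k + 1)) + M2.mulVec (v k) - M0.mulVec (v (k + 2))) ⬝ᵥ
          (v (k + 2) - w) : ℝ) : EReal) :=
  scheme_G_bound_general f A b hf α hα β hβ M0 M1 M2 v hrec
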